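/- arXiv:1008.5017 — 2 statements merged into one kernel-verified Lean document; each statement's English description precedes it below -/
import Mathlib

section
/- The image of L̂⊗L̂ under the cyclic symmetrization operator N equals the kernel of the bracket map H⊗L̂ → L̂, X⊗u ↦ [X,u], where L̂ is the completed free Lie algebra generated by H inside the completed tensor algebra. -/
/-! Model of the completed tensor algebra `T̂` of `H = ℚ^d`: an element of `T̂`
is a function assigning to each word in the basis letters (elements of `Fin d`)
its coefficient. -/

namespace Paper

/-- words in the basis letters of `H` -/
abbrev Word (d : ℕ) := List (Fin d)

/-- the completed tensor algebra, as coefficient functions on words -/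
abbrev Ten (d : ℕ) := Word d → ℚ

variable {d : ℕ}

/-- the unit `1 ∈ T̂` -/
def oneT : Ten d := fun w => if w = [] then 1 else 0

/-- the (concatenation) product of `T̂` -/
def mulT (f g : Ten d) : Ten d :=
  fun w => ∑ k ∈ Finset.range (w.length + 1), f (List.take k w) * g (List.drop k w)

/-- the commutator bracket `[a,b] = ab - ba` -/
def brT (f g : Ten d) : Ten d := mulT f g - mulT g f

/-- powers -/
def powT (f : Ten d) : ℕ → Ten d
  | 0 => oneT
  | n + 1 => mulT f (powT f n)

/-- the cyclic symmetrization operator `N`, with `N|_{H^{⊗p}} = ∑_{m<p} ν^m`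
and `N = 0` in degree `0`. -/
def Nop (f : Ten d) : Ten d := fun w => ∑ m ∈ Finset.range w.length, f (w.rotate m)

/-- the cyclic permutation `ν` -/
def nuT (f : Ten d) : Ten d := fun w => f (w.rotate (w.length - 1))

/-- being an element of `H ⊂ T̂` (homogeneous of degree 1) -/
def deg1 (f : Ten d) : Prop := ∀ w : Word d, w.length ≠ 1 → f w = 0

/-- the basis letter `i`, as a degree-one element of `T̂` -/
def singT (i : Fin d) : Ten d := fun w => if w = [i] then 1 else 0

/-- the right-normed iterated bracket `[x₁,[x₂,[⋯,[x_{k-1},x_k]⋯]]]` of a list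
of elements of `T̂` (a single element for a singleton, `0` for the empty list). -/
def rightBr : List (Ten d) → Ten d
  | [] => 0
  | [x] => x
  | x :: l => brT x (rightBr l)

/-- the left-normed iterated bracket `[⋯[[x,y₁],y₂],⋯,y_k]`. -/
def leftBr (x : Ten d) (l : List (Ten d)) : Ten d := l.foldl brT x

/-- the right-normed bracket of the letters of a word -/
def PhiWord : Word d → Ten d
  | [] => 0
  | [x] => singT x
  | x :: l => brT (singT x) (PhiWord l)

/-- the degree-`p` truncation (homogeneous part) of an element of `T̂` -/
def truncT (p : ℕ) (f : Ten d) : Ten d := fun w => if w.length = p then f w else 0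

/-- the degree-`p` part `𝓛_p` of the free Lie algebra generated by `H` inside
`T̂` (spanned by the right-normed brackets of words of length `p`) -/
def LieN (d p : ℕ) : Submodule ℚ (Ten d) :=
  Submodule.span ℚ {g : Ten d | ∃ w : Word d, w.length = p ∧ g = PhiWord w}

/-- membership in the completed free Lie algebra `𝓛̂ ⊂ T̂`: every homogeneous
component is a Lie element. -/
def memLhat (f : Ten d) : Prop := ∀ p : ℕ, truncT p f ∈ LieN d p

/-- membership in (the closure of) `H ⊗ 𝓛̂ ⊂ T̂₁`. -/
def memHLhat (f : Ten d) : Prop :=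
  ∀ p : ℕ, truncT p f ∈ Submodule.span ℚ
    {g : Ten d | ∃ X v : Ten d, deg1 X ∧ memLhat v ∧ g = mulT X v}

/-- membership in (the closure of) `𝓛̂ ⊗ 𝓛̂ ⊂ T̂`. -/
def memLLhat (f : Ten d) : Prop :=
  ∀ p : ℕ, truncT p f ∈ Submodule.span ℚ
    {g : Ten d | ∃ u v : Ten d, memLhat u ∧ memLhat v ∧ g = mulT u v}

/-- the bracket map `H ⊗ T̂ → T̂`, `X ⊗ u ↦ [X,u] = Xu - uX`, in coefficients:
the `uX`-part of an element `f = ∑ X ⊗ u_X` of `H ⊗ T̂ = T̂₁` has coefficient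
at `w` equal to `f` of the backwards rotation of `w`. -/
def brMap (f : Ten d) : Ten d := fun w => f w - f (w.rotate (w.length - 1))

/-! `brMap f = 0` says that the coefficients of `f` are invariant under rotation of words, while
`N` sums over rotations. Hence `N g` is always rotation invariant, and a rotation-invariant `f`
with `f [] = 0` is `N` of its rescaling by `1 / |w|` on each word `w`; when `f ∈ H ⊗ 𝓛̂`, that
rescaling lies in `H ⊗ 𝓛̂ ⊆ 𝓛̂ ⊗ 𝓛̂`.

What remains is `N (u v) ∈ H ⊗ 𝓛` for Lie elements `u, v`. Cyclicity `N (a b) = N (b a)` gives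
`N ([a, b] c) = N (a [b, c])`, which moves the brackets of `u = [x_i, u']` onto `v` and reduces
to `u = x_i`. The terms of `N (x_i v)` whose first letter is `x_i` form `x_i v`; for
`v = [x_{c_1}, [⋯, x_{c_k}]]` the others add up to
`∑_{j<k} x_{c_j} [[x_{c_{j+1}}, ⋯, x_{c_k}], z_j] + x_{c_k} z_k` with `z_1 = x_i` and
`z_{j+1} = [z_j, x_{c_j}]`, which is visibly in `H ⊗ 𝓛`. This formula is proved by induction on
`k`, simultaneously for `N (w v)` with `w` an arbitrary word. -/

theorem _root_.Function.Periodic.sum_range_add {M : Type*} [AddCancelCommMonoid M]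
    {g : ℕ → M} {n : ℕ} (hg : Function.Periodic g n) (k : ℕ) :
    ∑ m ∈ Finset.range n, g (k + m) = ∑ m ∈ Finset.range n, g m := by
  induction k with
  | zero => simp
  | succ k ih =>
    have h := Finset.sum_range_succ' (fun m => g (k + m)) n
    rw [Finset.sum_range_succ, hg k, ih, add_zero] at h
    refine add_right_cancel (b := g k) ?_
    simpa only [Nat.add_right_comm k 1, Nat.add_assoc] using h.symm

theorem _root_.List.periodic_rotate {α β : Type*} (F : List α → β) (l : List α) :
    Function.Periodic (fun m => F (l.rotate m)) l.length := fun m =>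
  congrArg F <| by rw [← List.rotate_mod l (m + l.length), Nat.add_mod_right, List.rotate_mod]

lemma mulT_add_left (f g h : Ten d) : mulT (f + g) h = mulT f h + mulT g h := by
  funext w
  simp [mulT, add_mul, Finset.sum_add_distrib]

lemma mulT_add_right (f g h : Ten d) : mulT f (g + h) = mulT f g + mulT f h := by
  funext w
  simp [mulT, mul_add, Finset.sum_add_distrib]

lemma mulT_smul_left (c : ℚ) (f g : Ten d) : mulT (c • f) g = c • mulT f g := by
  funext w
  simp [mulT, Finset.mul_sum, mul_assoc]

lemma mulT_smul_right (c : ℚ) (f g : Ten d) : mulT f (c • g) = c • mulT f g := by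
  funext w
  simp [mulT, Finset.mul_sum, mul_left_comm]

def mulL : Ten d →ₗ[ℚ] Ten d →ₗ[ℚ] Ten d :=
  LinearMap.mk₂ ℚ mulT mulT_add_left mulT_smul_left mulT_add_right mulT_smul_right

def brL : Ten d →ₗ[ℚ] Ten d →ₗ[ℚ] Ten d :=
  mulL - mulL.flip

lemma mulT_sub_left (f g h : Ten d) : mulT (f - g) h = mulT f h - mulT g h :=
  mulL.map_sub₂ f g h

lemma mulT_sub_right (f g h : Ten d) : mulT f (g - h) = mulT f g - mulT f h :=
  (mulL f).map_sub g h

lemma mulT_zero_left (f : Ten d) : mulT 0 f = 0 :=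
  mulL.map_zero₂ f

lemma mulT_zero_right (f : Ten d) : mulT f 0 = 0 :=
  (mulL f).map_zero

lemma mulT_assoc (f g h : Ten d) : mulT (mulT f g) h = mulT f (mulT g h) := by
  funext w
  set n := w.length
  let F : ℕ → ℕ → ℚ := fun j k =>
    f (w.take j) * g ((w.drop j).take (k - j)) * h (w.drop k)
  have lhs : mulT (mulT f g) h w =
      ∑ k ∈ Finset.Ico 0 (n + 1), ∑ j ∈ Finset.Ico 0 (k + 1), F j k := by
    simp only [mulT, Finset.sum_mul, Nat.Ico_zero_eq_range]
    refine Finset.sum_congr rfl fun k hk => ?_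
    have hk : k ≤ n := Nat.lt_succ_iff.mp (Finset.mem_range.mp hk)
    rw [List.length_take, Nat.min_eq_left hk]
    refine Finset.sum_congr rfl fun j hj => ?_
    have hj : j ≤ k := Nat.lt_succ_iff.mp (Finset.mem_range.mp hj)
    rw [List.take_take, Nat.min_eq_left hj, List.drop_take]
  have rhs : mulT f (mulT g h) w =
      ∑ j ∈ Finset.Ico 0 (n + 1), ∑ k ∈ Finset.Ico j (n + 1), F j k := by
    simp only [mulT, Finset.mul_sum, Nat.Ico_zero_eq_range]
    refine Finset.sum_congr rfl fun j hj => ?_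
    have hj : j ≤ n := Nat.lt_succ_iff.mp (Finset.mem_range.mp hj)
    rw [Finset.sum_Ico_eq_sum_range, List.length_drop, show n + 1 - j = n - j + 1 by omega]
    refine Finset.sum_congr rfl fun i _ => ?_
    simp only [F, List.drop_drop, Nat.add_sub_cancel_left, mul_assoc]
  rw [lhs, rhs, Finset.sum_Ico_Ico_comm]

lemma Nop_add (f g : Ten d) : Nop (f + g) = Nop f + Nop g := by
  funext w
  simp [Nop, Finset.sum_add_distrib]

lemma Nop_smul (c : ℚ) (f : Ten d) : Nop (c • f) = c • Nop f := by
  funext w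
  simp [Nop, Finset.mul_sum]

def NopL : Ten d →ₗ[ℚ] Ten d where
  toFun := Nop
  map_add' := Nop_add
  map_smul' := Nop_smul

lemma Nop_zero : Nop (0 : Ten d) = 0 :=
  NopL.map_zero

lemma Nop_sum {ι : Type*} (s : Finset ι) (f : ι → Ten d) :
    Nop (∑ i ∈ s, f i) = ∑ i ∈ s, Nop (f i) :=
  map_sum NopL f s

lemma Nop_sub (f g : Ten d) : Nop (f - g) = Nop f - Nop g :=
  NopL.map_sub f g

lemma Nop_mulT_comm (a b : Ten d) : Nop (mulT a b) = Nop (mulT b a) := by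
  funext w
  have hsplit : ∀ x y : Ten d, Nop (mulT x y) w =
      ∑ q ∈ Finset.range w.length ×ˢ Finset.range (w.length + 1),
        x ((w.rotate q.1).take q.2) * y ((w.rotate q.1).drop q.2) := by
    intro x y
    simp only [Nop, mulT, List.length_rotate, Finset.sum_product]
  rw [hsplit, hsplit]
  set n := w.length
  have hinv : ∀ q ∈ Finset.range n ×ˢ Finset.range (n + 1),
      ((q.1 + q.2) % n + (n - q.2)) % n = q.1 ∧ n - (n - q.2) = q.2 := by
    rintro ⟨m, k⟩ hq
    simp only [Finset.mem_product, Finset.mem_range] at hq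
    refine ⟨?_, by omega⟩
    rw [Nat.mod_add_mod, show m + k + (n - k) = m + n by omega, Nat.add_mod_right,
      Nat.mod_eq_of_lt hq.1]
  have hmaps : ∀ q ∈ Finset.range n ×ˢ Finset.range (n + 1),
      ((q.1 + q.2) % n, n - q.2) ∈ Finset.range n ×ˢ Finset.range (n + 1) := by
    rintro ⟨m, k⟩ hq
    simp only [Finset.mem_product, Finset.mem_range] at hq ⊢
    exact ⟨Nat.mod_lt _ (by omega), by omega⟩
  -- splitting the `m`-th rotation at `k` and the `(m + k)`-th rotation at `n - k`
  -- give the same two factors in the opposite order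
  refine Finset.sum_nbij' (fun q => ((q.1 + q.2) % n, n - q.2))
    (fun q => ((q.1 + q.2) % n, n - q.2)) hmaps hmaps
    (fun q hq => Prod.ext (hinv q hq).1 (hinv q hq).2)
    (fun q hq => Prod.ext (hinv q hq).1 (hinv q hq).2) ?_
  rintro ⟨m, k⟩ hq
  simp only [Finset.mem_product, Finset.mem_range] at hq
  set u := w.rotate m
  have hu : u.length = n := List.length_rotate ..
  have hrot : w.rotate ((m + k) % n) = u.drop k ++ u.take k := by
    rw [List.rotate_mod, ← List.rotate_rotate, List.rotate_eq_drop_append_take (by rw [hu]; omega)]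
  rw [hrot, List.take_left' (by simp; omega), List.drop_left' (by simp; omega), mul_comm]

lemma Nop_rotate (f : Ten d) (w : Word d) (k : ℕ) : Nop f (w.rotate k) = Nop f w := by
  simp only [Nop, List.length_rotate, List.rotate_rotate]
  exact (w.periodic_rotate f).sum_range_add k

def wordT (u : Word d) : Ten d := fun w => if w = u then 1 else 0

lemma Nop_wordT (u : Word d) :
    Nop (wordT u) = ∑ m ∈ Finset.range u.length, wordT (u.rotate m) := by
  funext w
  simp only [Nop, wordT, Finset.sum_apply]
  by_cases hlen : w.length = u.length
  · set n := u.length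
    calc ∑ m ∈ Finset.range w.length, (if w.rotate m = u then (1 : ℚ) else 0)
        = ∑ m ∈ Finset.range n, if w = u.rotate (n - 1 - m + 1) then 1 else 0 := by
          rw [hlen]
          refine Finset.sum_congr rfl fun m hm => ?_
          have hm : m < n := Finset.mem_range.mp hm
          rw [show n - 1 - m + 1 = n - m by omega]
          simp only [List.rotate_eq_iff, Nat.mod_eq_of_lt (show m < u.length from hm)]
          rfl
      _ = ∑ m ∈ Finset.range n, if w = u.rotate (1 + m) then 1 else 0 := by
          rw [Finset.sum_range_reflect (fun m => if w = u.rotate (m + 1) then (1 : ℚ) else 0) n]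
          simp only [add_comm]
      _ = ∑ m ∈ Finset.range n, if w = u.rotate m then 1 else 0 :=
          (u.periodic_rotate fun v => if w = v then (1 : ℚ) else 0).sum_range_add 1
  · have hne : ∀ m, w.rotate m ≠ u ∧ w ≠ u.rotate m := fun m =>
      ⟨fun h => hlen (by rw [← h, List.length_rotate]),
        fun h => hlen (by rw [h, List.length_rotate])⟩
    simp [hne]

lemma wordT_append (u v : Word d) : wordT (u ++ v) = mulT (wordT u) (wordT v) := by
  funext w
  simp only [mulT, wordT, ite_mul, one_mul, zero_mul]
  have hsplit : (w.take u.length = u ∧ w.drop u.length = v) ↔ w = u ++ v :=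
    ⟨fun ⟨h1, h2⟩ => by rw [← h1, ← h2, List.take_append_drop], by rintro rfl; simp⟩
  have htake : ∀ k, w.take k = u → k ≤ w.length → k = u.length := fun k he hk => by
    rw [← he, List.length_take, min_eq_left hk]
  rw [Finset.sum_eq_single u.length]
  · rw [← ite_and, if_congr hsplit rfl rfl]
  · intro k hk hku
    rw [if_neg fun he => hku (htake k he (Nat.lt_succ_iff.mp (Finset.mem_range.mp hk)))]
  · intro hu
    rw [if_neg fun he => hu (Finset.mem_range.mpr (Nat.lt_succ_iff.mpr ?_))]
    exact he ▸ List.length_take_le' ..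

lemma singT_eq_wordT (i : Fin d) : singT i = wordT [i] := rfl

lemma mulT_wordT_nil (f : Ten d) : mulT f (wordT []) = f := by
  funext w
  simp only [mulT, wordT, List.drop_eq_nil_iff, mul_ite, mul_one, mul_zero]
  rw [Finset.sum_eq_single w.length]
  · simp
  · intro k hk hkw
    rw [if_neg]
    have := Finset.mem_range.mp hk
    omega
  · simp

lemma brT_sub_left (a b c : Ten d) : brT (a - b) c = brT a c - brT b c := by
  simp only [brT, mulT_sub_left, mulT_sub_right]
  abel

lemma brT_sub_right (a b c : Ten d) : brT a (b - c) = brT a b - brT a c := by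
  simp only [brT, mulT_sub_left, mulT_sub_right]
  abel

lemma brT_jacobi (a b c : Ten d) : brT (brT a b) c = brT a (brT b c) - brT b (brT a c) := by
  simp only [brT, mulT_sub_left, mulT_sub_right, mulT_assoc]
  abel

lemma Nop_mulT_brT (a b c : Ten d) : Nop (mulT (brT a b) c) = Nop (mulT a (brT b c)) := by
  simp only [brT, mulT_sub_left, mulT_sub_right, Nop_sub, mulT_assoc]
  rw [Nop_mulT_comm b (mulT a c), mulT_assoc]

lemma brT_wordT_singT (a : Word d) (c : Fin d) :
    brT (wordT a) (singT c) = wordT (a ++ [c]) - wordT (c :: a) := by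
  rw [brT, singT_eq_wordT, ← wordT_append, ← wordT_append]
  rfl

/-- The terms of `Nop (wordT a * v)` whose first letter comes from `a`. -/
def cycHead (a : Word d) (v : Ten d) : Ten d :=
  ∑ k ∈ Finset.range a.length, mulT (wordT (a.drop k)) (mulT v (wordT (a.take k)))

/-- The terms of `Nop (z * PhiWord l)` whose first letter comes from `l`. -/
def cycTail : Ten d → Word d → Ten d
  | _, [] => 0
  | z, [c] => mulT (singT c) z
  | z, c :: l => mulT (singT c) (brT (PhiWord l) z) + cycTail (brT z (singT c)) l

lemma cycHead_singleton (i : Fin d) (v : Ten d) : cycHead [i] v = mulT (singT i) v := by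
  simp [cycHead, mulT_wordT_nil, singT_eq_wordT]

lemma cycHead_append_sub_cons (a : Word d) (c : Fin d) (v : Ten d) :
    cycHead (a ++ [c]) v - cycHead (c :: a) v
      = cycHead a (brT (singT c) v) + mulT (singT c) (brT v (wordT a)) := by
  have happ : cycHead (a ++ [c]) v = ∑ k ∈ Finset.range a.length,
      mulT (wordT (a.drop k)) (mulT (mulT (singT c) v) (wordT (a.take k)))
        + mulT (singT c) (mulT v (wordT a)) := by
    rw [cycHead, List.length_append, List.length_singleton, Finset.sum_range_succ,
      List.drop_left, List.take_left]
    congr 1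
    refine Finset.sum_congr rfl fun k hk => ?_
    have hk : k ≤ a.length := (Finset.mem_range.mp hk).le
    rw [List.drop_append_of_le_length hk, List.take_append_of_le_length hk, wordT_append,
      ← singT_eq_wordT]
    simp only [mulT_assoc]
  have hcons : cycHead (c :: a) v = ∑ k ∈ Finset.range a.length,
      mulT (wordT (a.drop k)) (mulT (mulT v (singT c)) (wordT (a.take k)))
        + mulT (singT c) (mulT (wordT a) v) := by
    rw [cycHead, List.length_cons, Finset.sum_range_succ']
    simp only [List.drop_succ_cons, List.take_succ_cons, List.drop_zero, List.take_zero]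
    congr 1
    · refine Finset.sum_congr rfl fun k _ => ?_
      rw [show c :: a.take k = [c] ++ a.take k from rfl, wordT_append, ← singT_eq_wordT,
        mulT_assoc]
    · rw [mulT_wordT_nil, show c :: a = [c] ++ a from rfl, wordT_append,
        ← singT_eq_wordT, mulT_assoc]
  rw [happ, hcons, cycHead]
  simp only [brT, mulT_sub_left, mulT_sub_right, Finset.sum_sub_distrib]
  abel

lemma cycTail_sub : ∀ (z z' : Ten d) (l : Word d),
    cycTail (z - z') l = cycTail z l - cycTail z' l
  | _, _, [] => (sub_zero 0).symm
  | _, _, [_] => mulT_sub_right ..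
  | z, z', c :: c' :: l => by
    simp only [cycTail, brT_sub_left, brT_sub_right, mulT_sub_right, cycTail_sub _ _ (c' :: l)]
    abel

lemma Nop_wordT_mulT_PhiWord : ∀ (a l : Word d),
    Nop (mulT (wordT a) (PhiWord l)) = cycHead a (PhiWord l) + cycTail (wordT a) l
  | a, [] => by
    simp [PhiWord, cycHead, cycTail, mulT_zero_left, mulT_zero_right, Nop_zero]
  | a, [c] => by
    have hrot : ∀ k ∈ Finset.range a.length, wordT ((a ++ [c]).rotate k)
        = mulT (wordT (a.drop k)) (mulT (singT c) (wordT (a.take k))) := by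
      intro k hk
      have hk : k ≤ a.length := (Finset.mem_range.mp hk).le
      rw [List.rotate_eq_drop_append_take (by simp; omega), List.drop_append_of_le_length hk,
        List.take_append_of_le_length hk, wordT_append, wordT_append, mulT_assoc]
      rfl
    show Nop (mulT (wordT a) (wordT [c])) = cycHead a (singT c) + mulT (singT c) (wordT a)
    rw [← wordT_append, Nop_wordT, List.length_append, List.length_singleton,
      Finset.sum_range_succ, List.rotate_append_length_eq, Finset.sum_congr rfl hrot,
      wordT_append]
    rfl
  | a, c :: c' :: l => by
    have hPhi : PhiWord (c :: c' :: l) = brT (singT c) (PhiWord (c' :: l)) := rfl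
    have htail : cycTail (wordT a) (c :: c' :: l) =
        mulT (singT c) (brT (PhiWord (c' :: l)) (wordT a))
          + cycTail (brT (wordT a) (singT c)) (c' :: l) := rfl
    rw [hPhi, ← Nop_mulT_brT, brT_wordT_singT, mulT_sub_left, Nop_sub,
      Nop_wordT_mulT_PhiWord (a ++ [c]) (c' :: l), Nop_wordT_mulT_PhiWord (c :: a) (c' :: l),
      htail, brT_wordT_singT, cycTail_sub, ← add_assoc, ← cycHead_append_sub_cons]
    abel

def LieSpan (d : ℕ) : Submodule ℚ (Ten d) :=
  Submodule.span ℚ (Set.range PhiWord)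

lemma PhiWord_mem_LieSpan (w : Word d) : PhiWord w ∈ LieSpan d :=
  Submodule.subset_span ⟨w, rfl⟩

lemma brT_singT_mem_LieSpan (i : Fin d) {z : Ten d} (hz : z ∈ LieSpan d) :
    brT (singT i) z ∈ LieSpan d := by
  refine (Submodule.span_le.mpr ?_ : LieSpan d ≤ (LieSpan d).comap (brL (singT i))) hz
  rintro _ ⟨l, rfl⟩
  cases l with
  | nil => exact zero_mem _
  | cons c l => exact PhiWord_mem_LieSpan (i :: c :: l)

lemma brT_PhiWord_mem_LieSpan : ∀ (w : Word d) {z : Ten d}, z ∈ LieSpan d →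
    brT (PhiWord w) z ∈ LieSpan d
  | [], _, _ => by simp [PhiWord, brT, mulT_zero_left, mulT_zero_right]
  | [i], _, hz => brT_singT_mem_LieSpan i hz
  | i :: c :: l, z, hz => by
    rw [show PhiWord (i :: c :: l) = brT (singT i) (PhiWord (c :: l)) from rfl, brT_jacobi]
    exact sub_mem (brT_singT_mem_LieSpan i (brT_PhiWord_mem_LieSpan (c :: l) hz))
      (brT_PhiWord_mem_LieSpan (c :: l) (brT_singT_mem_LieSpan i hz))

lemma brT_mem_LieSpan {x y : Ten d} (hx : x ∈ LieSpan d) (hy : y ∈ LieSpan d) :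
    brT x y ∈ LieSpan d := by
  refine (Submodule.span_le.mpr ?_ : LieSpan d ≤ (LieSpan d).comap (brL.flip y)) hx
  rintro _ ⟨w, rfl⟩
  exact brT_PhiWord_mem_LieSpan w hy

def IsHomog (p : ℕ) (f : Ten d) : Prop :=
  ∀ w : Word d, w.length ≠ p → f w = 0

lemma IsHomog.mulT {p q : ℕ} {f g : Ten d} (hf : IsHomog p f) (hg : IsHomog q g) :
    IsHomog (p + q) (mulT f g) := by
  intro w hw
  refine Finset.sum_eq_zero fun k hk => ?_
  have hk : k ≤ w.length := Nat.lt_succ_iff.mp (Finset.mem_range.mp hk)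
  by_cases hkp : k = p
  · rw [hg _ (by rw [List.length_drop]; omega), mul_zero]
  · rw [hf _ (by rw [List.length_take]; omega), zero_mul]

lemma IsHomog.brT {p q : ℕ} {f g : Ten d} (hf : IsHomog p f) (hg : IsHomog q g) :
    IsHomog (p + q) (brT f g) := by
  intro w hw
  simp only [Paper.brT, Pi.sub_apply, hf.mulT hg w hw, (hg.mulT hf) w (by omega), sub_zero]

lemma isHomog_singT (i : Fin d) : IsHomog 1 (singT i) := by
  intro w hw
  simp only [singT, ite_eq_right_iff]
  rintro rfl
  exact absurd rfl hw

lemma isHomog_PhiWord : ∀ w : Word d, IsHomog w.length (PhiWord w)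
  | [] => fun _ _ => rfl
  | [i] => isHomog_singT i
  | i :: c :: l => by
    rw [List.length_cons, Nat.add_comm]
    exact (isHomog_singT i).brT (isHomog_PhiWord (c :: l))

lemma IsHomog.truncT_eq {p : ℕ} {f : Ten d} (hf : IsHomog p f) (q : ℕ) :
    truncT q f = if q = p then f else 0 := by
  funext w
  split_ifs with hq
  · simp only [truncT, ite_eq_left_iff]
    exact fun hw => (hf w (hq ▸ hw)).symm
  · simp only [truncT, Pi.zero_apply, ite_eq_right_iff]
    exact fun hw => hf w (hw ▸ hq)

lemma truncT_add (p : ℕ) (f g : Ten d) : truncT p (f + g) = truncT p f + truncT p g := by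
  funext w
  simp only [truncT, Pi.add_apply]
  split_ifs <;> simp

lemma truncT_smul (p : ℕ) (c : ℚ) (f : Ten d) : truncT p (c • f) = c • truncT p f := by
  funext w
  simp only [truncT, Pi.smul_apply]
  split_ifs <;> simp

def truncL (p : ℕ) : Ten d →ₗ[ℚ] Ten d where
  toFun := truncT p
  map_add' := truncT_add p
  map_smul' := truncT_smul p

lemma truncT_truncT (p : ℕ) (f : Ten d) : truncT p (truncT p f) = truncT p f := by
  funext w
  simp only [truncT]
  split_ifs <;> rfl

lemma Nop_truncT (p : ℕ) (f : Ten d) : Nop (truncT p f) = truncT p (Nop f) := by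
  funext w
  simp only [Nop, truncT, List.length_rotate]
  split_ifs <;> simp

lemma truncT_mulT (p : ℕ) (f g : Ten d) :
    truncT p (mulT f g) = ∑ a ∈ Finset.range (p + 1), mulT (truncT a f) (truncT (p - a) g) := by
  funext w
  simp only [truncT, mulT, Finset.sum_apply, List.length_take, List.length_drop]
  rw [Finset.sum_comm]
  have hinner : ∀ k ∈ Finset.range (w.length + 1), ∑ a ∈ Finset.range (p + 1),
      (if min k w.length = a then f (w.take k) else 0) *
        (if w.length - k = p - a then g (w.drop k) else 0)
      = if w.length = p then f (w.take k) * g (w.drop k) else 0 := by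
    intro k hk
    have hk : k ≤ w.length := Nat.lt_succ_iff.mp (Finset.mem_range.mp hk)
    simp only [min_eq_left hk, ite_mul, zero_mul, Finset.sum_ite_eq, Finset.mem_range]
    by_cases hp : w.length = p
    · rw [if_pos (by omega), if_pos (by omega), if_pos hp]
    · rw [if_neg hp]
      split_ifs <;> first | rfl | exact mul_zero _ | omega
  rw [Finset.sum_congr rfl hinner, Finset.sum_ite_irrel, Finset.sum_const_zero]

def Lhat (d : ℕ) : Submodule ℚ (Ten d) :=
  ⨅ p, (LieN d p).comap (truncL p)

lemma mem_Lhat {f : Ten d} : f ∈ Lhat d ↔ memLhat f := by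
  simp only [Lhat, Submodule.mem_iInf, Submodule.mem_comap]
  rfl

lemma LieSpan_le_Lhat : LieSpan d ≤ Lhat d := by
  refine Submodule.span_le.mpr ?_
  rintro _ ⟨w, rfl⟩
  refine mem_Lhat.mpr fun p => ?_
  rw [(isHomog_PhiWord w).truncT_eq]
  split_ifs with hp
  · exact Submodule.subset_span ⟨w, hp.symm, rfl⟩
  · exact zero_mem _

lemma LieN_le_LieSpan (p : ℕ) : LieN d p ≤ LieSpan d :=
  Submodule.span_mono fun _ ⟨w, _, hw⟩ => ⟨w, hw.symm⟩

lemma mem_LieSpan_of_deg1 {f : Ten d} (hf : deg1 f) : f ∈ LieSpan d := by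
  have hsum : f = ∑ i, f [i] • PhiWord [i] := by
    funext w
    simp only [Finset.sum_apply, Pi.smul_apply, PhiWord, singT, smul_eq_mul, mul_ite, mul_one,
      mul_zero]
    by_cases hw : w.length = 1
    · obtain ⟨c, rfl⟩ := List.length_eq_one_iff.mp hw
      simp
    · rw [hf w hw, Finset.sum_eq_zero]
      rintro c -
      rw [if_neg (by rintro rfl; exact hw rfl)]
  rw [hsum]
  exact Submodule.sum_mem _ fun i _ => Submodule.smul_mem _ _ (PhiWord_mem_LieSpan [i])

def spanHL (d : ℕ) : Submodule ℚ (Ten d) :=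
  Submodule.span ℚ {g : Ten d | ∃ X v : Ten d, deg1 X ∧ memLhat v ∧ g = mulT X v}

def spanLL (d : ℕ) : Submodule ℚ (Ten d) :=
  Submodule.span ℚ {g : Ten d | ∃ u v : Ten d, memLhat u ∧ memLhat v ∧ g = mulT u v}

lemma spanHL_le_spanLL : spanHL d ≤ spanLL d :=
  Submodule.span_mono fun _ ⟨X, v, hX, hv, hg⟩ =>
    ⟨X, v, mem_Lhat.mp (LieSpan_le_Lhat (mem_LieSpan_of_deg1 hX)), hv, hg⟩

lemma apply_nil_eq_zero_of_memHLhat {f : Ten d} (hf : memHLhat f) : f [] = 0 := by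
  have hker : spanHL d ≤ LinearMap.ker (LinearMap.proj []) := by
    refine Submodule.span_le.mpr ?_
    rintro _ ⟨X, v, hX, -, rfl⟩
    simp [mulT, hX [] (by simp)]
  simpa [truncT] using hker (hf 0)

lemma mulT_singT_mem_spanHL (i : Fin d) {z : Ten d} (hz : z ∈ LieSpan d) :
    mulT (singT i) z ∈ spanHL d :=
  Submodule.subset_span ⟨singT i, z, isHomog_singT i, mem_Lhat.mp (LieSpan_le_Lhat hz), rfl⟩

lemma cycTail_mem_spanHL : ∀ (l : Word d) {z : Ten d}, z ∈ LieSpan d → cycTail z l ∈ spanHL d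
  | [], _, _ => zero_mem _
  | [c], _, hz => mulT_singT_mem_spanHL c hz
  | c :: c' :: l, _, hz =>
    add_mem (mulT_singT_mem_spanHL c (brT_mem_LieSpan (PhiWord_mem_LieSpan _) hz))
      (cycTail_mem_spanHL (c' :: l) (brT_mem_LieSpan hz (PhiWord_mem_LieSpan [c])))

lemma Nop_singT_mulT_mem_spanHL (i : Fin d) {z : Ten d} (hz : z ∈ LieSpan d) :
    Nop (mulT (singT i) z) ∈ spanHL d := by
  refine (Submodule.span_le.mpr ?_ : LieSpan d ≤ (spanHL d).comap (NopL ∘ₗ mulL (singT i))) hz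
  rintro _ ⟨l, rfl⟩
  show Nop (mulT (wordT [i]) (PhiWord l)) ∈ spanHL d
  rw [Nop_wordT_mulT_PhiWord, cycHead_singleton]
  exact add_mem (mulT_singT_mem_spanHL i (PhiWord_mem_LieSpan l))
    (cycTail_mem_spanHL l (PhiWord_mem_LieSpan [i]))

lemma Nop_mulT_mem_spanHL {x y : Ten d} (hx : x ∈ LieSpan d) (hy : y ∈ LieSpan d) :
    Nop (mulT x y) ∈ spanHL d := by
  refine (Submodule.span_le.mpr ?_ : LieSpan d ≤ (spanHL d).comap (NopL ∘ₗ mulL.flip y)) hx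
  rintro _ ⟨w, rfl⟩
  show Nop (mulT (PhiWord w) y) ∈ spanHL d
  match w with
  | [] => simp [PhiWord, mulT_zero_left, Nop_zero]
  | [i] => exact Nop_singT_mulT_mem_spanHL i hy
  | i :: c :: l =>
    rw [show PhiWord (i :: c :: l) = brT (singT i) (PhiWord (c :: l)) from rfl, Nop_mulT_brT]
    exact Nop_singT_mulT_mem_spanHL i (brT_mem_LieSpan (PhiWord_mem_LieSpan _) hy)

lemma memHLhat_Nop {g : Ten d} (hg : memLLhat g) : memHLhat (Nop g) := by
  intro p
  have hgen : spanLL d ≤ (spanHL d).comap (truncL p ∘ₗ NopL) := by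
    refine Submodule.span_le.mpr ?_
    rintro _ ⟨u, v, hu, hv, rfl⟩
    show truncT p (Nop (mulT u v)) ∈ spanHL d
    rw [← Nop_truncT, truncT_mulT, Nop_sum]
    exact Submodule.sum_mem _ fun a _ =>
      Nop_mulT_mem_spanHL (LieN_le_LieSpan a (hu a)) (LieN_le_LieSpan (p - a) (hv (p - a)))
  have h : truncT p (Nop (truncT p g)) ∈ spanHL d := hgen (hg p)
  rwa [Nop_truncT, truncT_truncT] at h

lemma brMap_Nop (g : Ten d) : brMap (Nop g) = 0 := by
  funext w
  exact sub_eq_zero.mpr (Nop_rotate g w _).symm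

lemma apply_rotate_of_brMap_eq_zero {f : Ten d} (hf : brMap f = 0) (w : Word d) (m : ℕ) :
    f (w.rotate m) = f w := by
  have hback : ∀ u : Word d, f u = f (u.rotate (u.length - 1)) := fun u =>
    sub_eq_zero.mp (congrFun hf u)
  rcases Nat.eq_zero_or_pos w.length with h0 | hpos
  · rw [List.length_eq_zero_iff.mp h0, List.rotate_nil]
  induction m with
  | zero => rw [List.rotate_zero]
  | succ m ih =>
    rw [← ih, hback, List.rotate_rotate, List.length_rotate,
      show m + 1 + (w.length - 1) = m + w.length by omega]
    exact w.periodic_rotate f m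

lemma Nop_apply_of_rotate_invariant {f : Ten d} (hf : ∀ w m, f (w.rotate m) = f w)
    (w : Word d) : Nop f w = w.length * f w := by
  simp [Nop, hf]

def divLength (f : Ten d) : Ten d := fun w => (w.length : ℚ)⁻¹ * f w

lemma memLLhat_divLength {f : Ten d} (hf : memHLhat f) : memLLhat (divLength f) := by
  intro p
  have htrunc : truncT p (divLength f) = (p : ℚ)⁻¹ • truncT p f := by
    funext w
    simp only [truncT, divLength, Pi.smul_apply, smul_eq_mul]
    split_ifs with hw <;> simp [hw]
  rw [htrunc]
  exact Submodule.smul_mem _ _ (spanHL_le_spanLL (hf p))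

lemma Nop_divLength {f : Ten d} (hf : ∀ w m, f (w.rotate m) = f w) (hnil : f [] = 0) :
    Nop (divLength f) = f := by
  funext w
  rw [Nop_apply_of_rotate_invariant (fun w m => by simp only [divLength, List.length_rotate, hf])]
  rcases eq_or_ne w [] with rfl | hw
  · simp [hnil]
  · have hlen : (w.length : ℚ) ≠ 0 := Nat.cast_ne_zero.mpr (List.length_pos_iff.mpr hw).ne'
    rw [divLength, ← mul_assoc, mul_inv_cancel₀ hlen, one_mul]

/-- The image of `𝓛̂ ⊗̂ 𝓛̂` under the cyclic symmetrization
operator `N` equals the kernel of the bracket map `H ⊗ 𝓛̂ → 𝓛̂`,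
`X ⊗ u ↦ [X,u]`. -/
theorem Nop_image_LL_eq_ker_bracket (d : ℕ) :
    {f : Ten d | ∃ g : Ten d, memLLhat g ∧ Nop g = f}
      = {f : Ten d | memHLhat f ∧ brMap f = 0} := by
  ext f
  constructor
  · rintro ⟨g, hg, rfl⟩
    exact ⟨memHLhat_Nop hg, brMap_Nop g⟩
  · rintro ⟨hH, hB⟩
    exact ⟨divLength f, memLLhat_divLength hH,
      Nop_divLength (apply_rotate_of_brMap_eq_zero hB) (apply_nil_eq_zero_of_memHLhat hH)⟩

end Paper
end

section
/- In a symplectic vector space H, the kernel of the bracket map H⊗L₂ → L₃, X⊗u ↦ [X,u] (where L_k is the degree-k part of the free Lie algebra on H), equals Λ³H embedded in H⊗L₂ = H⊗Λ²H. -/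
/-! Model of the completed tensor algebra `T̂` of `H = ℚ^d`: an element of `T̂`
is a function assigning to each word in the basis letters (elements of `Fin d`)
its coefficient. -/

namespace Paper

variable {d : ℕ}

/-! The bracket `X ⊗ u ↦ Xu - uX` on degree-3 tensors is `f ↦ f - ν f`, so its kernel consists
of the cyclically invariant tensors. For a tensor antisymmetric in its last two slots, cyclic
invariance is equivalent to antisymmetry in the first two slots as well, i.e. to full
antisymmetry. -/

theorem cyclic_invariant_iff_antisymm_left {α M : Type*} [AddCommGroup M] {g : α → α → α → M}
    (hg : ∀ a b c, g a b c = -g a c b) :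
    (∀ a b c, g c a b = g a b c) ↔ ∀ a b c, g a b c = -g b a c := by
  constructor
  · intro hcyc a b c
    rw [← hcyc a b c, hg c a b, hcyc b a c]
  · intro hleft a b c
    rw [hleft c a b, hg a c b, neg_neg]

theorem brMap_eq_sub_nuT (f : Ten d) : brMap f = f - nuT f := rfl

theorem brMap_eq_zero_iff (f : Ten d) : brMap f = 0 ↔ nuT f = f := by
  rw [brMap_eq_sub_nuT, sub_eq_zero, eq_comm]

theorem nuT_eq_self_iff_of_homogeneous {p : ℕ} {f : Ten d}
    (hf : ∀ w : Word d, w.length ≠ p → f w = 0) :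
    nuT f = f ↔ ∀ w : Word d, w.length = p → f (w.rotate (p - 1)) = f w := by
  constructor
  · rintro h w rfl
    exact congrFun h w
  · intro h
    funext w
    by_cases hw : w.length = p
    · subst hw
      exact h w rfl
    · rw [nuT, hf w hw, hf _ (by rwa [List.length_rotate])]

theorem nuT_eq_self_iff_of_degree_three {f : Ten d}
    (hf : ∀ w : Word d, w.length ≠ 3 → f w = 0) :
    nuT f = f ↔ ∀ a b c : Fin d, f [c, a, b] = f [a, b, c] := by
  rw [nuT_eq_self_iff_of_homogeneous hf]
  constructor
  · intro h a b c
    exact h [a, b, c] rfl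
  · intro h w hw
    obtain ⟨a, b, c, rfl⟩ := List.length_eq_three.mp hw
    exact h a b c

/-- Here `H ⊗ 𝓛₂` consists of the degree-3 tensors antisymmetric in the last two
slots, and (the image of) `Λ³H` consists of the fully antisymmetric degree-3
tensors. -/
theorem ker_bracket_eq_lambda3 (d : ℕ) :
    {f : Ten d | (∀ w : Word d, w.length ≠ 3 → f w = 0) ∧
      (∀ a b c : Fin d, f [a, b, c] = - f [a, c, b]) ∧ brMap f = 0}
    = {f : Ten d | (∀ w : Word d, w.length ≠ 3 → f w = 0) ∧
      (∀ a b c : Fin d, f [a, b, c] = - f [a, c, b]) ∧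
      (∀ a b c : Fin d, f [a, b, c] = - f [b, a, c])} := by
  ext f
  refine and_congr_right fun hdeg => and_congr_right fun hright => ?_
  rw [brMap_eq_zero_iff, nuT_eq_self_iff_of_degree_three hdeg]
  exact cyclic_invariant_iff_antisymm_left (g := fun a b c => f [a, b, c]) hright

end Paper
end
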